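/- arXiv:2212.11570 — 4 statements merged into one kernel-verified Lean document; each statement's English description precedes it below -/
import Mathlib

section
/- Let V : ℝ → ℝ be a concave function with derivative tending to h > 0 as t → +∞, and let 𝔪 be the measure e^{V(t)} dt on ℝ. Then the volume entropy of (ℝ, |·|, 𝔪) equals h, i.e. lim_{r→∞} (1/r) · log(𝔪(B_r(x₀))) = h for any x₀ ∈ ℝ. -/
open MeasureTheory Filter Metric Set

/-- Minkowski content of a set with respect to a measure. -/
noncomputable def minkowskiContent {X : Type*} [PseudoMetricSpace X] [MeasurableSpace X]
    (μ : Measure X) (Ω : Set X) : ℝ :=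
  liminf (fun ε : ℝ => ((μ (thickening ε Ω)).toReal - (μ Ω).toReal) / ε) (nhdsWithin 0 (Ioi 0))

/-!
Since `V'` is antitone and tends to `h`, it stays `≥ h`, so `V` grows at least like `h t`.
Hence the mass of `(-∞, s]` is at most `e^{V s} / h`, while the unit interval just below `s`
carries mass at least `e^{V (s - 1)}`. For a ball of radius `r` about `x₀` this pins
`log 𝔪(B_r(x₀))` between `V (x₀ + r - 1)` and `V (x₀ + r) - log h`, and both, divided by `r`,
tend to `h` because `V' → h`.
-/

lemma ConcaveOn.le_deriv_of_tendsto {f : ℝ → ℝ} {h : ℝ} (hf : ConcaveOn ℝ univ f)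
    (hd : Differentiable ℝ f) (hlim : Tendsto (deriv f) atTop (nhds h)) (t : ℝ) :
    h ≤ deriv f t :=
  (antitoneOn_univ.1 (hf.antitoneOn_deriv fun x _ => hd x)).le_of_tendsto hlim t

lemma eventually_lt_div_of_eventually_le_deriv {f : ℝ → ℝ} (hf : Differentiable ℝ f)
    {a b : ℝ} (hab : a < b) (hb : ∀ᶠ t in atTop, b ≤ deriv f t) (c : ℝ) :
    ∀ᶠ r in atTop, a < f (c + r) / r := by
  obtain ⟨S, hS⟩ := eventually_atTop.1 hb
  have hgrowth : ∀ t, S ≤ t → f S + b * (t - S) ≤ f t := fun t ht => by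
    have := (convex_Ici S).mul_sub_le_image_sub_of_le_deriv hf.continuous.continuousOn
      hf.differentiableOn (fun x hx => hS x (interior_subset hx)) S self_mem_Ici t ht ht
    linarith
  have hlim : Tendsto (fun r => (f S + b * (c - S)) / r + b) atTop (nhds b) := by
    simpa using ((tendsto_const_nhds (x := f S + b * (c - S))).div_atTop tendsto_id).add
      (tendsto_const_nhds (x := b))
  filter_upwards [hlim.eventually_const_lt hab, eventually_ge_atTop (max 1 (S - c))]
    with r hlt hr
  have hr0 : 0 < r := by linarith [le_max_left 1 (S - c)]
  calc a < (f S + b * (c - S)) / r + b := hlt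
    _ = (f S + b * (c + r - S)) / r := by field_simp; ring
    _ ≤ f (c + r) / r :=
      div_le_div_of_nonneg_right (hgrowth _ (by linarith [le_max_right 1 (S - c)])) hr0.le

theorem tendsto_div_atTop_of_tendsto_deriv {f : ℝ → ℝ} {h : ℝ} (hf : Differentiable ℝ f)
    (hlim : Tendsto (deriv f) atTop (nhds h)) (c : ℝ) :
    Tendsto (fun r => f (c + r) / r) atTop (nhds h) := by
  refine tendsto_order.2 ⟨fun a ha => ?_, fun b hb => ?_⟩
  · obtain ⟨a', ha, ha'⟩ := exists_between ha
    exact eventually_lt_div_of_eventually_le_deriv hf ha (hlim.eventually_const_le ha') c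
  · obtain ⟨b', hb', hb⟩ := exists_between hb
    have hneg : Tendsto (deriv (-f)) atTop (nhds (-h)) := by
      simpa only [deriv.neg'] using hlim.neg
    filter_upwards [eventually_lt_div_of_eventually_le_deriv hf.neg (neg_lt_neg hb)
      (hneg.eventually_const_le (neg_lt_neg hb')) c] with r hr
    rw [Pi.neg_apply, neg_div, neg_lt_neg_iff] at hr
    exact hr

section ExpDensity

variable {V : ℝ → ℝ}

lemma withDensity_exp_Iic_le {h s : ℝ} (hh : 0 < h)
    (hV : ∀ t ≤ s, V t ≤ V s + h * (t - s)) :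
    volume.withDensity (fun t => ENNReal.ofReal (Real.exp (V t))) (Iic s)
      ≤ ENNReal.ofReal (Real.exp (V s) / h) := by
  rw [withDensity_apply _ measurableSet_Iic]
  calc ∫⁻ t in Iic s, ENNReal.ofReal (Real.exp (V t))
      ≤ ∫⁻ t in Iic s, ENNReal.ofReal (Real.exp (V s - h * s) * Real.exp (h * t)) :=
        setLIntegral_mono' measurableSet_Iic fun t ht => ENNReal.ofReal_le_ofReal <| by
          rw [← Real.exp_add]
          exact Real.exp_le_exp.2 (by linarith [hV t ht])
    _ = ENNReal.ofReal (∫ t in Iic s, Real.exp (V s - h * s) * Real.exp (h * t)) :=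
        (ofReal_integral_eq_lintegral_ofReal ((integrableOn_exp_mul_Iic hh s).const_mul _)
          (ae_of_all _ fun t => by positivity)).symm
    _ = ENNReal.ofReal (Real.exp (V s) / h) := by
        rw [integral_const_mul, integral_exp_mul_Iic hh, mul_div_assoc', ← Real.exp_add,
          sub_add_cancel]

lemma le_withDensity_exp_Ioo (hV : Monotone V) {a b : ℝ} :
    ENNReal.ofReal (Real.exp (V a) * (b - a))
      ≤ volume.withDensity (fun t => ENNReal.ofReal (Real.exp (V t))) (Ioo a b) := by
  rw [withDensity_apply _ measurableSet_Ioo]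
  calc ENNReal.ofReal (Real.exp (V a) * (b - a))
      = ∫⁻ _ in Ioo a b, ENNReal.ofReal (Real.exp (V a)) := by
        rw [setLIntegral_const, Real.volume_Ioo, ENNReal.ofReal_mul (Real.exp_pos _).le]
    _ ≤ ∫⁻ t in Ioo a b, ENNReal.ofReal (Real.exp (V t)) :=
        setLIntegral_mono' measurableSet_Ioo fun t ht =>
          ENNReal.ofReal_le_ofReal (Real.exp_le_exp.2 (hV ht.1.le))

lemma log_withDensity_exp_ball_mem_Icc {h : ℝ} (hh : 0 < h)
    (hV : ∀ ⦃s t⦄, s ≤ t → h * (t - s) ≤ V t - V s) (x₀ : ℝ) {r : ℝ} (hr : 1 ≤ r) :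
    Real.log (volume.withDensity (fun t => ENNReal.ofReal (Real.exp (V t))) (ball x₀ r)).toReal
      ∈ Icc (V (x₀ - 1 + r)) (V (x₀ + r) - Real.log h) := by
  set μ := volume.withDensity fun t => ENNReal.ofReal (Real.exp (V t))
  have hmono : Monotone V := fun s t hst => by nlinarith [hV hst]
  have hupper : μ (ball x₀ r) ≤ ENNReal.ofReal (Real.exp (V (x₀ + r)) / h) :=
    (measure_mono (Real.ball_eq_Ioo x₀ r ▸ Ioo_subset_Iio_self.trans Iio_subset_Iic_self)).trans
      (withDensity_exp_Iic_le hh fun t ht => by linarith [hV ht])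
  have hlower : ENNReal.ofReal (Real.exp (V (x₀ - 1 + r))) ≤ μ (ball x₀ r) := by
    refine le_trans ?_ (measure_mono (s := Ioo (x₀ - 1 + r) (x₀ + r)) ?_)
    · have := le_withDensity_exp_Ioo hmono (a := x₀ - 1 + r) (b := x₀ + r)
      rwa [show x₀ + r - (x₀ - 1 + r) = 1 by ring, mul_one] at this
    · rw [Real.ball_eq_Ioo]
      exact Ioo_subset_Ioo (by linarith) le_rfl
  have hfin : μ (ball x₀ r) ≠ ⊤ := ne_top_of_le_ne_top ENNReal.ofReal_ne_top hupper
  have hexp_le := (ENNReal.ofReal_le_iff_le_toReal hfin).1 hlower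
  constructor
  · simpa using Real.log_le_log (Real.exp_pos _) hexp_le
  · have := Real.log_le_log ((Real.exp_pos _).trans_le hexp_le)
      (ENNReal.toReal_le_of_le_ofReal (by positivity) hupper)
    rwa [Real.log_div (Real.exp_ne_zero _) hh.ne', Real.log_exp] at this

end ExpDensity

/-- for `V` concave with `V' → h > 0` at `+∞`, the volume entropy of
`(ℝ, |·|, e^{V(t)} dt)` equals `h` at every basepoint. -/
theorem volume_entropy_of_concave_density
    (V V' : ℝ → ℝ) (hconc : ConcaveOn ℝ Set.univ V)
    (hderiv : ∀ t, HasDerivAt V (V' t) t)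
    (h : ℝ) (hpos : 0 < h) (hlim : Tendsto V' atTop (nhds h))
    (μ : Measure ℝ)
    (hμ : μ = volume.withDensity (fun t => ENNReal.ofReal (Real.exp (V t)))) :
    ∀ x₀ : ℝ,
      Tendsto (fun r : ℝ => Real.log ((μ (Metric.ball x₀ r)).toReal) / r)
        atTop (nhds h) := by
  intro x₀
  obtain rfl : V' = deriv V := funext fun t => (hderiv t).deriv.symm
  have hd : Differentiable ℝ V := fun t => (hderiv t).differentiableAt
  have hgrowth := mul_sub_le_image_sub_of_le_deriv hd (hconc.le_deriv_of_tendsto hd hlim)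
  have hupper : Tendsto (fun r => (V (x₀ + r) - Real.log h) / r) atTop (nhds h) := by
    simpa [sub_div] using (tendsto_div_atTop_of_tendsto_deriv hd hlim x₀).sub
      (tendsto_const_nhds.div_atTop tendsto_id)
  subst hμ
  refine tendsto_of_tendsto_of_tendsto_of_le_of_le'
    (tendsto_div_atTop_of_tendsto_deriv hd hlim (x₀ - 1)) hupper ?_ ?_ <;>
    filter_upwards [eventually_ge_atTop 1] with r hr
  · exact div_le_div_of_nonneg_right
      (log_withDensity_exp_ball_mem_Icc hpos hgrowth x₀ hr).1 (by linarith)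
  · exact div_le_div_of_nonneg_right
      (log_withDensity_exp_ball_mem_Icc hpos hgrowth x₀ hr).2 (by linarith)
end

section
/- Let 𝔪 be a measure on ℝ with log-concave density e^{−V} (V convex). For every measurable set Ω ⊂ ℝ with 0 < 𝔪(Ω) < ∞ and every σ > 0, the σ-neighborhood satisfies 𝔪(Ω^σ) ≥ 𝔪(Ω)·e^{σ h}, provided the Minkowski content bound 𝔪⁺(Ω') ≥ h·𝔪(Ω') holds for every measurable Ω' ⊃ Ω of finite measure. -/
/-!
Put `g x = 𝔪(Ω ∪ Ωˣ)`, so that `g 0 = 𝔪(Ω)` and `g x = 𝔪(Ωˣ)` for `x > 0`. Since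
`(Ω ∪ Ωˣ)ᵉ = Ω ∪ Ωˣ⁺ᵉ`, the isoperimetric inequality for `Ω' = Ω ∪ Ωˣ` says that the lower
right Dini derivative of `g` is at least `h g`, and a one-sided Grönwall argument for the
monotone function `g` gives `g σ ≥ g 0 · e^{hσ}`.

This needs the neighbourhoods to have finite measure, and that is where log-concavity enters.
For fixed `t`, convexity makes `V (x + t) - V x` monotone in `x`, so the ratio
`e^{V (x + t) - V x}` of the densities at `x` and `x + t` is bounded off a half-line on which `V`
grows linearly, and which therefore has finite mass. Hence translates of sets of finite
measure have finite measure; as `Ω²ᵟ` is covered by three translates of `Ωᵟ`, one neighbourhood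
of finite measure makes all of them finite. Some `Ωᵟ` is finite, for otherwise the quotients
defining `𝔪⁺(Ω)` would be `-𝔪(Ω)/ε`, contradicting `𝔪⁺(Ω) ≥ h 𝔪(Ω) > 0`.
-/

open MeasureTheory Filter Metric Set Topology
open scoped ENNReal

section Convex

variable {V : ℝ → ℝ}

theorem ConvexOn.continuous_of_univ (hV : ConvexOn ℝ univ V) : Continuous V :=
  continuousOn_univ.1 (hV.continuousOn isOpen_univ)

theorem ConvexOn.map_add_map_le_of_add_eq (hV : ConvexOn ℝ univ V) {a b p q : ℝ}
    (hap : a ≤ p) (hpb : p ≤ b) (hpq : p + q = a + b) : V p + V q ≤ V a + V b := by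
  obtain rfl : q = a + b - p := by linarith
  rcases hap.eq_or_lt with rfl | hap
  · simp
  have hab : 0 < b - a := by linarith
  set θ := (b - p) / (b - a) with hθ
  have hθ₀ : 0 ≤ θ := div_nonneg (by linarith) hab.le
  have hθ₁ : 0 ≤ 1 - θ := by
    rw [hθ, one_sub_div hab.ne']
    exact div_nonneg (by linarith) hab.le
  have hp : θ • a + (1 - θ) • b = p := by
    simp only [smul_eq_mul, hθ]
    field_simp
    ring
  have hq : (1 - θ) • a + θ • b = a + b - p := by
    simp only [smul_eq_mul, hθ]
    field_simp
    ring
  have h₁ := hV.2 (mem_univ a) (mem_univ b) hθ₀ hθ₁ (by ring)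
  have h₂ := hV.2 (mem_univ a) (mem_univ b) hθ₁ hθ₀ (by ring)
  rw [hp] at h₁
  rw [hq] at h₂
  simp only [smul_eq_mul] at h₁ h₂
  linarith

theorem ConvexOn.map_add_sub_map_le (hV : ConvexOn ℝ univ V) {t x y : ℝ}
    (h : 0 ≤ t * (y - x)) : V (x + t) - V x ≤ V (y + t) - V y := by
  rcases lt_trichotomy t 0 with ht | rfl | ht
  · have hyx : y ≤ x := by nlinarith
    linarith [hV.map_add_map_le_of_add_eq (a := y + t) (b := x) (p := x + t) (q := y)
      (by linarith) (by linarith) (by ring)]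
  · simp
  · have hxy : x ≤ y := by nlinarith
    linarith [hV.map_add_map_le_of_add_eq (a := x) (b := y + t) (p := x + t) (q := y)
      (by linarith) (by linarith) (by ring)]

theorem ConvexOn.add_abs_slope_mul_le (hV : ConvexOn ℝ univ V) {a b x : ℝ} (hab : V a < V b)
    (hx : 0 ≤ (b - a) * (x - b)) : V b + |slope V a b| * |x - b| ≤ V x := by
  have hba : a ≠ b := by rintro rfl; exact hab.false
  rcases eq_or_ne x b with rfl | hxb
  · simp
  have hs : (b - a) * slope V a b = V b - V a := sub_smul_slope V a b
  have hsx : (x - b) * slope V b x = V x - V b := sub_smul_slope V b x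
  have hmono := hV.slope_mono (mem_univ b)
  have hkey : 0 ≤ (x - b) * (slope V b x - slope V a b) := by
    rw [slope_comm V a b]
    rcases le_total a x with hax | hxa
    · have hxb' : 0 ≤ x - b := by
        by_contra! hneg
        nlinarith [lt_of_le_of_ne (show a ≤ b by linarith) hba]
      exact mul_nonneg hxb' (sub_nonneg.2 (hmono ⟨mem_univ a, hba⟩ ⟨mem_univ x, hxb⟩ hax))
    · have hxb' : x - b ≤ 0 := by
        by_contra! hpos
        nlinarith [lt_of_le_of_ne (show b ≤ a by linarith) hba.symm]
      exact mul_nonneg_of_nonpos_of_nonpos hxb'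
        (sub_nonpos.2 (hmono ⟨mem_univ x, hxb⟩ ⟨mem_univ a, hba⟩ hxa))
  have hsign : 0 ≤ slope V a b * (x - b) := by
    have hsq : 0 < (b - a) ^ 2 := by positivity
    nlinarith
  rw [← abs_mul, abs_of_nonneg hsign]
  nlinarith

end Convex

noncomputable def expNegMeasure (V : ℝ → ℝ) : Measure ℝ :=
  volume.withDensity fun t => ENNReal.ofReal (Real.exp (-V t))

theorem integrable_exp_neg_mul_abs_sub {c : ℝ} (hc : 0 < c) (b : ℝ) :
    Integrable fun x => Real.exp (-c * |x - b|) := by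
  rw [← integrableOn_univ, ← Iic_union_Ioi (a := b)]
  refine IntegrableOn.union ?_ ?_
  · refine IntegrableOn.congr_fun
      ((integrableOn_exp_mul_Iic hc b).const_mul (Real.exp (-c * b)))
      (fun x hx => ?_) measurableSet_Iic
    rw [abs_of_nonpos (sub_nonpos.2 hx), ← Real.exp_add]
    ring_nf
  · refine IntegrableOn.congr_fun
      ((integrableOn_exp_mul_Ioi (neg_neg_of_pos hc) b).const_mul (Real.exp (c * b)))
      (fun x hx => ?_) measurableSet_Ioi
    rw [abs_of_pos (sub_pos.2 hx), ← Real.exp_add]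
    ring_nf

section ExpNegMeasure

variable {V : ℝ → ℝ}

theorem expNegMeasure_lt_top_of_lt (hV : ConvexOn ℝ univ V) {a b : ℝ} (hab : V a < V b) :
    expNegMeasure V {x | 0 < (b - a) * (x - a)} < ⊤ := by
  have : IsLocallyFiniteMeasure (expNegMeasure V) :=
    IsLocallyFiniteMeasure.withDensity_ofReal hV.continuous_of_univ.neg.rexp
  have hba : a ≠ b := by rintro rfl; exact hab.false
  set c := |slope V a b|
  have hc : 0 < c := by
    refine abs_pos.2 fun h0 => hab.ne ?_
    have := sub_smul_slope V a b
    simp only [h0, smul_zero, vsub_eq_sub] at this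
    linarith
  have hsub : {x | 0 < (b - a) * (x - a)} ⊆ uIcc a b ∪ {x | 0 ≤ (b - a) * (x - b)} := by
    intro x (hx : 0 < (b - a) * (x - a))
    rcases le_or_gt 0 ((b - a) * (x - b)) with hfar | hnear
    · exact Or.inr hfar
    refine Or.inl (mem_uIcc.2 ?_)
    rcases lt_or_gt_of_ne hba with h | h
    · exact Or.inl ⟨by nlinarith, by nlinarith⟩
    · exact Or.inr ⟨by nlinarith, by nlinarith⟩
  have hfar : expNegMeasure V {x | 0 ≤ (b - a) * (x - b)} < ⊤ := by
    calc expNegMeasure V {x | 0 ≤ (b - a) * (x - b)}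
        = ∫⁻ x in {x | 0 ≤ (b - a) * (x - b)}, ENNReal.ofReal (Real.exp (-V x)) :=
          withDensity_apply' _ _
      _ ≤ ∫⁻ x in {x | 0 ≤ (b - a) * (x - b)},
            ENNReal.ofReal (Real.exp (-V b) * Real.exp (-c * |x - b|)) := by
          refine setLIntegral_mono (by fun_prop) fun x hx => ENNReal.ofReal_le_ofReal ?_
          rw [← Real.exp_add, Real.exp_le_exp]
          linarith [hV.add_abs_slope_mul_le hab hx]
      _ ≤ ∫⁻ x, ENNReal.ofReal (Real.exp (-V b) * Real.exp (-c * |x - b|)) :=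
          setLIntegral_le_lintegral _ _
      _ < ⊤ := ((integrable_exp_neg_mul_abs_sub hc b).const_mul _).lintegral_lt_top
  exact (measure_mono hsub).trans_lt (measure_union_lt_top isCompact_uIcc.measure_lt_top hfar)

theorem expNegMeasure_preimage_add_le (hV : Measurable V) {t C : ℝ} {T : Set ℝ}
    (hT : ∀ x ∉ T, V (x + t) - V x ≤ C) (S : Set ℝ) :
    expNegMeasure V ((· + t) ⁻¹' S) ≤
      expNegMeasure V T + ENNReal.ofReal (Real.exp C) * expNegMeasure V S := by
  have hw : Measurable fun x => ENNReal.ofReal (Real.exp (-V (x + t))) :=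
    ENNReal.measurable_ofReal.comp
      (Real.measurable_exp.comp (hV.comp (measurable_add_const t)).neg)
  set P := (· + t) ⁻¹' S
  calc expNegMeasure V P ≤ expNegMeasure V (P ∩ T) + expNegMeasure V (P \ T) :=
        measure_le_inter_add_sdiff _ _ _
    _ ≤ expNegMeasure V T + ∫⁻ x in P \ T, ENNReal.ofReal (Real.exp (-V x)) :=
        add_le_add (measure_mono inter_subset_right) (withDensity_apply' _ _).le
    _ ≤ expNegMeasure V T +
          ∫⁻ x in P, ENNReal.ofReal (Real.exp C) * ENNReal.ofReal (Real.exp (-V (x + t))) := by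
        refine add_le_add_right ((setLIntegral_mono (hw.const_mul _) fun x hx => ?_).trans
          (lintegral_mono_set sdiff_subset)) _
        rw [← ENNReal.ofReal_mul (Real.exp_pos _).le, ← Real.exp_add]
        exact ENNReal.ofReal_le_ofReal (Real.exp_le_exp.2 (by linarith [hT x hx.2]))
    _ = expNegMeasure V T + ENNReal.ofReal (Real.exp C) * expNegMeasure V S := by
        rw [lintegral_const_mul _ hw,
          (measurePreserving_add_right volume t).setLIntegral_comp_preimage_emb
            (measurableEmbedding_addRight t) (fun y => ENNReal.ofReal (Real.exp (-V y))) S,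
          expNegMeasure, withDensity_apply' _ S]

theorem expNegMeasure_preimage_add_lt_top (hV : ConvexOn ℝ univ V) {S : Set ℝ}
    (hS : expNegMeasure V S < ⊤) (t : ℝ) : expNegMeasure V ((· + t) ⁻¹' S) < ⊤ := by
  obtain ⟨T, C, hT, hTC⟩ : ∃ T C, expNegMeasure V T < ⊤ ∧ ∀ x ∉ T, V (x + t) - V x ≤ C := by
    by_cases h : ∃ x₀, V x₀ < V (x₀ + t)
    · obtain ⟨x₀, hx₀⟩ := h
      refine ⟨_, V (x₀ + t) - V x₀, expNegMeasure_lt_top_of_lt hV hx₀, fun x hx => ?_⟩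
      simp only [mem_ofPred_eq, add_sub_cancel_left, not_lt] at hx
      exact hV.map_add_sub_map_le (by linarith)
    · push Not at h
      exact ⟨∅, 0, by simp, fun x _ => by linarith [h x]⟩
  exact (expNegMeasure_preimage_add_le hV.continuous_of_univ.measurable hTC S).trans_lt
    (ENNReal.add_lt_top.2 ⟨hT, ENNReal.mul_lt_top ENNReal.ofReal_lt_top hS⟩)

end ExpNegMeasure

theorem Real.thickening_two_mul_subset (A : Set ℝ) (δ : ℝ) :
    thickening (2 * δ) A ⊆
      thickening δ A ∪ (· + δ) ⁻¹' thickening δ A ∪ (· + -δ) ⁻¹' thickening δ A := by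
  intro x hx
  obtain ⟨a, ha, hxa⟩ := mem_thickening_iff.1 hx
  rw [Real.dist_eq, abs_lt] at hxa
  simp only [mem_union, mem_preimage, mem_thickening_iff, Real.dist_eq, abs_lt]
  have hδ : 0 < δ := by linarith [hxa.1, hxa.2]
  rcases le_or_gt (x - a) (-δ) with hleft | hleft
  · exact Or.inl (Or.inr ⟨a, ha, by constructor <;> linarith⟩)
  rcases lt_or_ge (x - a) δ with hright | hright
  · exact Or.inl (Or.inl ⟨a, ha, hleft, hright⟩)
  · exact Or.inr ⟨a, ha, by constructor <;> linarith⟩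

theorem measure_thickening_lt_top_of_preimage_add {μ : Measure ℝ}
    (hμ : ∀ S : Set ℝ, μ S < ⊤ → ∀ t, μ ((· + t) ⁻¹' S) < ⊤) {A : Set ℝ} {δ : ℝ}
    (hδ : 0 < δ) (hA : μ (thickening δ A) < ⊤) (ε : ℝ) : μ (thickening ε A) < ⊤ := by
  have hdouble : ∀ n : ℕ, μ (thickening (2 ^ n * δ) A) < ⊤ := by
    intro n
    induction n with
    | zero => simpa using hA
    | succ n ih =>
      rw [pow_succ', mul_assoc]
      exact (measure_mono (Real.thickening_two_mul_subset A _)).trans_lt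
        (measure_union_lt_top (measure_union_lt_top ih (hμ _ ih _)) (hμ _ ih _))
  obtain ⟨n, hn⟩ := pow_unbounded_of_one_lt (ε / δ) one_lt_two
  exact (measure_mono (thickening_mono ((div_lt_iff₀ hδ).1 hn).le A)).trans_lt (hdouble n)

/-- In `ℝ`, the `liminf` of a function that is not bounded below is the junk value `0`. -/
theorem Real.eventually_lt_of_lt_liminf_of_nonneg {α : Type*} {f : Filter α} {u : α → ℝ}
    {b : ℝ} (hb : 0 ≤ b) (h : b < liminf u f) : ∀ᶠ a in f, b < u a := by
  by_cases hu : IsBoundedUnder (· ≥ ·) f u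
  · exact eventually_lt_of_lt_liminf h hu
  · rw [Real.liminf_of_not_isBoundedUnder hu] at h
    exact absurd h hb.not_gt

theorem eventually_measure_thickening_lt_top {X : Type*} [PseudoMetricSpace X]
    [MeasurableSpace X] {μ : Measure X} {Ω : Set X} (h : 0 < minkowskiContent μ Ω) :
    ∀ᶠ ε in 𝓝[>] 0, μ (thickening ε Ω) < ⊤ := by
  filter_upwards [Real.eventually_lt_of_lt_liminf_of_nonneg le_rfl h, self_mem_nhdsWithin]
    with ε hε (hε₀ : 0 < ε)
  refine lt_top_iff_ne_top.2 fun htop => ?_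
  rw [htop, ENNReal.toReal_top, zero_sub, div_pos_iff_of_pos_right hε₀] at hε
  linarith [ENNReal.toReal_nonneg (a := μ Ω)]

section Thickening

variable {E : Type*} [SeminormedAddCommGroup E] [NormedSpace ℝ E]

theorem thickening_union_thickening (Ω : Set E) {x ε : ℝ} (hx : 0 ≤ x) (hε : 0 < ε) :
    thickening ε (Ω ∪ thickening x Ω) = Ω ∪ thickening (x + ε) Ω := by
  rw [union_eq_right.2 (self_subset_thickening (show 0 < x + ε by linarith) Ω),
    thickening_union]
  rcases hx.eq_or_lt with rfl | hx
  · simp [thickening_of_nonpos le_rfl]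
  · rw [thickening_thickening hε hx, add_comm,
      union_eq_right.2 (thickening_mono (by linarith) Ω)]

theorem minkowskiContent_union_thickening [MeasurableSpace E] (μ : Measure E) (Ω : Set E)
    {x : ℝ} (hx : 0 ≤ x) :
    minkowskiContent μ (Ω ∪ thickening x Ω) =
      liminf (fun ε => ((μ (Ω ∪ thickening (x + ε) Ω)).toReal -
        (μ (Ω ∪ thickening x Ω)).toReal) / ε) (𝓝[>] 0) :=
  liminf_congr <| eventually_nhdsWithin_of_forall fun ε hε => by
    rw [thickening_union_thickening Ω hx hε]

end Thickening

theorem eventually_exp_mul_le_one_add_mul {c d : ℝ} (h : c < d) :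
    ∀ᶠ ε in 𝓝[>] (0 : ℝ), Real.exp (c * ε) ≤ 1 + d * ε := by
  have hderiv : HasDerivWithinAt (fun ε => Real.exp (c * ε)) c (Ioi 0) 0 := by
    simpa using ((hasDerivAt_id (0 : ℝ)).const_mul c).exp.hasDerivWithinAt
  filter_upwards [hderiv.limsup_slope_le' (lt_irrefl (0 : ℝ)) h, self_mem_nhdsWithin]
    with ε hε (hε₀ : 0 < ε)
  rw [slope_def_field, sub_zero, mul_zero, Real.exp_zero, div_lt_iff₀ hε₀] at hε
  linarith

theorem eventually_mul_exp_le_of_le_liminf {g : ℝ → ℝ} {a c k x : ℝ} (ha : 0 < a)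
    (hc : 0 ≤ c) (hck : c < k) (hx : a * Real.exp (c * x) ≤ g x)
    (hgrowth : k * g x ≤ liminf (fun ε => (g (x + ε) - g x) / ε) (𝓝[>] 0)) :
    ∀ᶠ ε in 𝓝[>] 0, a * Real.exp (c * (x + ε)) ≤ g (x + ε) := by
  obtain ⟨d, hcd, hdk⟩ := exists_between hck
  set A := a * Real.exp (c * x)
  have hA : 0 < A := by positivity
  have hd : d * A < liminf (fun ε => (g (x + ε) - g x) / ε) (𝓝[>] 0) :=
    calc d * A < k * A := mul_lt_mul_of_pos_right hdk hA
      _ ≤ k * g x := mul_le_mul_of_nonneg_left hx (by linarith)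
      _ ≤ _ := hgrowth
  filter_upwards [Real.eventually_lt_of_lt_liminf_of_nonneg (mul_nonneg (by linarith) hA.le) hd,
    eventually_exp_mul_le_one_add_mul hcd, self_mem_nhdsWithin]
    with ε hslope hexp (hε : 0 < ε)
  rw [lt_div_iff₀ hε] at hslope
  calc a * Real.exp (c * (x + ε)) = A * Real.exp (c * ε) := by
        rw [mul_add, Real.exp_add, mul_assoc]
    _ ≤ A * (1 + d * ε) := mul_le_mul_of_nonneg_left hexp hA.le
    _ ≤ g (x + ε) := by nlinarith

theorem mul_exp_le_of_le_liminf_of_lt {g : ℝ → ℝ} {c k σ : ℝ} (hσ : 0 ≤ σ) (hg₀ : 0 < g 0)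
    (hmono : MonotoneOn g (Icc 0 σ)) (hc : 0 ≤ c) (hck : c < k)
    (hgrowth : ∀ x ∈ Ico 0 σ,
      k * g x ≤ liminf (fun ε => (g (x + ε) - g x) / ε) (𝓝[>] 0)) :
    g 0 * Real.exp (c * σ) ≤ g σ := by
  set S := {x ∈ Icc 0 σ | g 0 * Real.exp (c * x) ≤ g x}
  have hS₀ : 0 ∈ S := ⟨⟨le_rfl, hσ⟩, by simp⟩
  have hbdd : BddAbove S := ⟨σ, fun x hx => hx.1.2⟩
  set s := sSup S
  have hs : s ∈ Icc 0 σ := ⟨le_csSup hbdd hS₀, csSup_le ⟨0, hS₀⟩ fun x hx => hx.1.2⟩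
  have hsS : g 0 * Real.exp (c * s) ≤ g s := by
    refine le_of_tendsto ((by fun_prop : Continuous fun τ => g 0 * Real.exp (c * τ)).tendsto s
      |>.mono_left nhdsWithin_le_nhds) (eventually_nhdsWithin_of_forall (s := Iio s) ?_)
    intro τ (hτ : τ < s)
    obtain ⟨x, hxS, hτx⟩ := exists_lt_of_lt_csSup ⟨0, hS₀⟩ hτ
    calc g 0 * Real.exp (c * τ) ≤ g 0 * Real.exp (c * x) := by gcongr
      _ ≤ g x := hxS.2
      _ ≤ g s := hmono hxS.1 hs (le_csSup hbdd hxS)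
  rcases hs.2.eq_or_lt with hsσ | hsσ
  · rwa [← hsσ]
  obtain ⟨ε, hεS, hε₀, hεσ⟩ := ((eventually_mul_exp_le_of_le_liminf hg₀ hc hck hsS
    (hgrowth s ⟨hs.1, hsσ⟩)).and (Ioo_mem_nhdsGT (sub_pos.2 hsσ))).exists
  have : s + ε ≤ s := le_csSup hbdd ⟨⟨by linarith [hs.1], by linarith⟩, hεS⟩
  linarith

theorem mul_exp_le_of_le_liminf {g : ℝ → ℝ} {k σ : ℝ} (hk : 0 < k) (hσ : 0 ≤ σ)
    (hg₀ : 0 < g 0) (hmono : MonotoneOn g (Icc 0 σ))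
    (hgrowth : ∀ x ∈ Ico 0 σ,
      k * g x ≤ liminf (fun ε => (g (x + ε) - g x) / ε) (𝓝[>] 0)) :
    g 0 * Real.exp (k * σ) ≤ g σ :=
  le_of_tendsto ((by fun_prop : Continuous fun c => g 0 * Real.exp (c * σ)).tendsto k
    |>.mono_left nhdsWithin_le_nhds) <| Filter.mem_of_superset (Ioo_mem_nhdsLT hk)
      fun c hc => mul_exp_le_of_le_liminf_of_lt hσ hg₀ hmono hc.1.le hc.2 hgrowth

/-- exponential growth of neighborhoods under a linear isoperimetric
inequality, for a log-concave measure on `ℝ`. -/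
theorem neighborhood_exponential_growth
    (V : ℝ → ℝ) (hV : ConvexOn ℝ Set.univ V)
    (μ : Measure ℝ)
    (hμ : μ = volume.withDensity (fun t => ENNReal.ofReal (Real.exp (-V t))))
    (h : ℝ) (hh : 0 < h)
    (Ω : Set ℝ) (hΩmeas : MeasurableSet Ω) (hΩpos : 0 < μ Ω) (hΩfin : μ Ω < ⊤)
    (hiso : ∀ Ω' : Set ℝ, MeasurableSet Ω' → Ω ⊆ Ω' → μ Ω' < ⊤ →
      minkowskiContent μ Ω' ≥ h * (μ Ω').toReal) :
    ∀ σ : ℝ, 0 < σ →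
      (μ (thickening σ Ω)).toReal ≥ (μ Ω).toReal * Real.exp (σ * h) := by
  intro σ hσ
  replace hμ : μ = expNegMeasure V := hμ
  subst hμ
  have hm : 0 < (expNegMeasure V Ω).toReal := ENNReal.toReal_pos hΩpos.ne' hΩfin.ne
  obtain ⟨δ, hδfin, hδ⟩ := ((eventually_measure_thickening_lt_top
    ((mul_pos hh hm).trans_le (hiso Ω hΩmeas subset_rfl hΩfin))).and self_mem_nhdsWithin).exists
  have hfin (x : ℝ) : expNegMeasure V (Ω ∪ thickening x Ω) < ⊤ :=
    measure_union_lt_top hΩfin <| measure_thickening_lt_top_of_preimage_add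
      (fun _ hS t => expNegMeasure_preimage_add_lt_top hV hS t) hδ hδfin x
  set g : ℝ → ℝ := fun x => (expNegMeasure V (Ω ∪ thickening x Ω)).toReal
  have hmono : Monotone g := fun x y hxy =>
    ENNReal.toReal_mono (hfin y).ne
      (measure_mono (union_subset_union_right Ω (thickening_mono hxy Ω)))
  have hgrowth (x : ℝ) (hx : x ∈ Ico 0 σ) :
      h * g x ≤ liminf (fun ε => (g (x + ε) - g x) / ε) (𝓝[>] 0) := by
    rw [← minkowskiContent_union_thickening _ _ hx.1]
    exact hiso _ (hΩmeas.union isOpen_thickening.measurableSet) subset_union_left (hfin x)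
  have hg₀ : g 0 = (expNegMeasure V Ω).toReal := by simp [g, thickening_of_nonpos le_rfl]
  have hgσ : g σ = (expNegMeasure V (thickening σ Ω)).toReal := by
    simp only [g, union_eq_right.2 (self_subset_thickening hσ Ω)]
  have := mul_exp_le_of_le_liminf hh hσ.le (hg₀ ▸ hm) (hmono.monotoneOn _) hgrowth
  rwa [hg₀, hgσ, mul_comm h σ] at this
end

section
/- Let f : [0,∞) → ℝ be a function such that for some ε > 0 and all r, δ > 0: f(r) ≥ ((δ+ε)/(r+δ))·f(ε) + ((r−ε)/(r+δ))·f(r+δ), with f(ε) ≥ 0. Then the limit lim_{r→∞} f(r)/r exists in [0, +∞]. -/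
/-!
Write `g = f - f ε`. With `δ = s - r` the hypothesis reads `(r - ε) g(s) ≤ g(r) s` for
`ε < r < s`. On a bounded interval `(ε, R)` this contracts the negative part of `g` by the
factor `(R - ε)/R`, so `g ≥ 0` on `(ε, ∞)`. With `A = inf_{r > ε} g(r)/(r - ε) ≥ 0` the same
inequality squeezes `A (s - ε)/s ≤ g(s)/s ≤ g(r)/(r - ε)` for all `ε < r < s`, hence
`f(s)/s → A`; the limit is even finite.
-/

open Filter Set Topology

section Chord

variable {g : ℝ → ℝ} {ε : ℝ}

theorem chord_ineq_of_concavity {f : ℝ → ℝ} (hε : 0 < ε)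
    (hconc : ∀ r δ : ℝ, 0 < r → 0 < δ →
      f r ≥ ((δ + ε) / (r + δ)) * f ε + ((r - ε) / (r + δ)) * f (r + δ))
    {r s : ℝ} (hr : ε < r) (hrs : r < s) :
    (r - ε) * (f s - f ε) ≤ (f r - f ε) * s := by
  have hs : 0 < s := by linarith
  have h := hconc r (s - r) (by linarith) (by linarith)
  rw [add_sub_cancel, ge_iff_le, div_mul_eq_mul_div, div_mul_eq_mul_div, ← add_div,
    div_le_iff₀ hs] at h
  linarith

variable (hε : 0 < ε) (hg : ∀ r s, ε < r → r < s → (r - ε) * g s ≤ g r * s)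
include hε hg

theorem div_le_div_sub_of_chord {a b : ℝ} (ha : ε < a) (hab : a < b) :
    g b / b ≤ g a / (a - ε) := by
  rw [div_le_div_iff₀ (by linarith) (by linarith)]
  linarith [hg a b ha hab]

theorem div_mul_le_of_chord {a b : ℝ} (ha : ε < a) (hab : a < b) :
    (a - ε) / b * g b ≤ g a := by
  rw [div_mul_eq_mul_div, div_le_iff₀ (by linarith)]
  exact hg a b ha hab

theorem neg_pow_mul_le_of_chord {R : ℝ} (n : ℕ) {a : ℝ} (ha : a ∈ Ioo ε R) :
    -(((R - ε) / R) ^ n * |g R|) ≤ g a := by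
  have hR : 0 < R := by linarith [ha.1, ha.2]
  induction n generalizing a with
  | zero =>
    obtain ⟨haε, haR⟩ := ha
    have hq : (a - ε) / R ≤ 1 := by
      rw [div_le_one hR]; linarith
    calc -(((R - ε) / R) ^ 0 * |g R|) = 1 * -|g R| := by ring
      _ ≤ (a - ε) / R * -|g R| :=
          mul_le_mul_of_nonpos_right hq (neg_nonpos.2 (abs_nonneg _))
      _ ≤ (a - ε) / R * g R :=
          mul_le_mul_of_nonneg_left (neg_abs_le _) (div_nonneg (by linarith) hR.le)
      _ ≤ g a := div_mul_le_of_chord hε hg haε haR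
  | succ n ih =>
    obtain ⟨haε, haR⟩ := ha
    set q := (R - ε) / R
    set b := (a + R) / 2 with hb_def
    have hab : a < b := by linarith
    have hb : b ∈ Ioo ε R := ⟨by linarith, by linarith⟩
    have hq : (a - ε) / b ≤ q := by
      rw [div_le_div_iff₀ (by linarith) hR]
      nlinarith [mul_pos hR (sub_pos.2 hab), mul_pos hε (sub_pos.2 hb.2)]
    have hC : 0 ≤ q ^ n * |g R| :=
      mul_nonneg (pow_nonneg (div_nonneg (by linarith) hR.le) n) (abs_nonneg _)
    calc -(q ^ (n + 1) * |g R|) = q * -(q ^ n * |g R|) := by ring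
      _ ≤ (a - ε) / b * -(q ^ n * |g R|) := mul_le_mul_of_nonpos_right hq (neg_nonpos.2 hC)
      _ ≤ (a - ε) / b * g b :=
          mul_le_mul_of_nonneg_left (ih hb) (div_nonneg (by linarith) (by linarith))
      _ ≤ g a := div_mul_le_of_chord hε hg haε hab

theorem nonneg_of_chord {r : ℝ} (hr : ε < r) : 0 ≤ g r := by
  have hq : Tendsto (fun n : ℕ => ((r + 1 - ε) / (r + 1)) ^ n) atTop (𝓝 0) :=
    tendsto_pow_atTop_nhds_zero_of_lt_one (div_nonneg (by linarith) (by linarith))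
      ((div_lt_one (by linarith)).2 (by linarith))
  have hbound := (hq.mul_const |g (r + 1)|).neg
  rw [zero_mul, neg_zero] at hbound
  exact le_of_tendsto' hbound fun n =>
    neg_pow_mul_le_of_chord hε hg (R := r + 1) n ⟨hr, by linarith⟩

theorem div_sub_nonneg_of_chord {r : ℝ} (hr : ε < r) : 0 ≤ g r / (r - ε) :=
  div_nonneg (nonneg_of_chord hε hg hr) (sub_nonneg.2 hr.le)

theorem tendsto_div_atTop_iInf_of_chord :
    Tendsto (fun s => g s / s) atTop (𝓝 (⨅ r : Ioi ε, g r / (r - ε))) := by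
  set A := ⨅ r : Ioi ε, g r / (r - ε)
  have hbdd : BddBelow (range fun r : Ioi ε => g r / (r - ε)) :=
    ⟨0, by rintro _ ⟨⟨r, hr⟩, rfl⟩; exact div_sub_nonneg_of_chord hε hg hr⟩
  rw [tendsto_order]
  constructor
  · intro a ha
    have hlower : Tendsto (fun s => A * (1 - ε / s)) atTop (𝓝 A) := by
      simpa using (tendsto_const_nhds.div_atTop tendsto_id).const_sub 1 |>.const_mul A
    filter_upwards [hlower.eventually (lt_mem_nhds ha), eventually_gt_atTop ε] with s has hs
    refine has.trans_le ?_
    have hAs : A ≤ g s / (s - ε) := ciInf_le hbdd ⟨s, hs⟩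
    rw [le_div_iff₀ (by linarith)] at hAs
    rw [le_div_iff₀ (by linarith)]
    have hs0 : s ≠ 0 := by linarith
    calc A * (1 - ε / s) * s = A * (s - ε) := by field_simp
      _ ≤ g s := hAs
  · intro a ha
    obtain ⟨⟨r, hr⟩, hra⟩ := exists_lt_of_ciInf_lt ha
    filter_upwards [eventually_gt_atTop r] with s hs
    exact (div_le_div_sub_of_chord hε hg hr hs).trans_lt hra

end Chord

theorem entropy_limit_exists_general
    (f : ℝ → ℝ) (ε : ℝ) (hε : 0 < ε)
    (hconc : ∀ r δ : ℝ, 0 < r → 0 < δ →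
      f r ≥ ((δ + ε) / (r + δ)) * f ε + ((r - ε) / (r + δ)) * f (r + δ)) :
    ∃ L : EReal, 0 ≤ L ∧
      Tendsto (fun r : ℝ => ((f r / r : ℝ) : EReal)) atTop (nhds L) := by
  have hchord : ∀ r s, ε < r → r < s → (r - ε) * (f s - f ε) ≤ (f r - f ε) * s :=
    fun r s hr hrs => chord_ineq_of_concavity hε hconc hr hrs
  set A := ⨅ r : Ioi ε, (f r - f ε) / (r - ε)
  have hA : 0 ≤ A := le_ciInf fun r => div_sub_nonneg_of_chord hε hchord r.2
  have hlim : Tendsto (fun r => f r / r) atTop (𝓝 A) := by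
    have := (tendsto_div_atTop_iInf_of_chord hε hchord).add
      (tendsto_const_nhds (x := f ε) |>.div_atTop tendsto_id)
    simpa [← add_div] using this
  exact ⟨A, EReal.coe_nonneg.2 hA, EReal.tendsto_coe.2 hlim⟩

/-- abstract existence of the volume entropy.  If `f` satisfies the
concavity-type inequality `f(r) ≥ ((δ+ε)/(r+δ))f(ε) + ((r-ε)/(r+δ))f(r+δ)` for some
`ε > 0` with `f(ε) ≥ 0` and all `r, δ > 0`, then `lim_{r→∞} f(r)/r` exists in `[0, +∞]`. -/
theorem entropy_limit_exists
    (f : ℝ → ℝ) (ε : ℝ) (hε : 0 < ε) (hfε : 0 ≤ f ε)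
    (hconc : ∀ r δ : ℝ, 0 < r → 0 < δ →
      f r ≥ ((δ + ε) / (r + δ)) * f ε + ((r - ε) / (r + δ)) * f (r + δ)) :
    ∃ L : EReal, 0 ≤ L ∧
      Tendsto (fun r : ℝ => ((f r / r : ℝ) : EReal)) atTop (nhds L) :=
  entropy_limit_exists_general f ε hε hconc
end

section
/- Let V : ℝ → ℝ be convex, 𝔪 = e^{−V(t)} dt, and let Ω = [0, b] with v := 𝔪([0,b]) < ∞. If h₁ := −V'(b) satisfies h₁ ≥ e^{−V(b)}/v, then a contradiction follows; hence −V'(b) < e^{−V(b)}/𝔪([0,b]) whenever −V'(b) > 0. -/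
open MeasureTheory Set intervalIntegral

/-! By convexity `V` lies above its tangent line at `b`, so on `[0, b]` the density `e^{-V}` is
dominated by `e^{-V(b)} e^{h₁ (x - b)}` with `h₁ = -V'(b) > 0`. Integrating gives
`𝔪([0, b]) ≤ e^{-V(b)} (1 - e^{-h₁ b}) / h₁ < e^{-V(b)} / h₁`. -/

lemma ConvexOn.add_mul_sub_le_of_hasDerivAt {S : Set ℝ} {f : ℝ → ℝ} {f' x y : ℝ}
    (hfc : ConvexOn ℝ S f) (hx : x ∈ S) (hy : y ∈ S) (hf' : HasDerivAt f f' y) :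
    f y + f' * (x - y) ≤ f x := by
  rcases lt_trichotomy x y with hxy | rfl | hyx
  · have h := hfc.slope_le_of_hasDerivAt hx hy hxy hf'
    rw [slope_def_field, div_le_iff₀ (sub_pos.mpr hxy)] at h
    linarith
  · simp
  · have h := hfc.le_slope_of_hasDerivAt hy hx hyx hf'
    rw [slope_def_field, le_div_iff₀ (sub_pos.mpr hyx)] at h
    linarith

lemma integral_exp_mul_sub_lt_inv {h : ℝ} (hh : 0 < h) (a b : ℝ) :
    ∫ x in a..b, Real.exp (h * (x - b)) < h⁻¹ := by
  simp_rw [mul_sub]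
  rw [integral_comp_mul_sub (fun x => Real.exp x) hh.ne', integral_exp, sub_self, Real.exp_zero,
    smul_eq_mul]
  exact mul_lt_of_lt_one_right (inv_pos.mpr hh) (sub_lt_self _ (Real.exp_pos _))

/-- for `V` convex with `𝔪 = e^{-V}dt` and `Ω = [0,b]`, the slope
`h₁ = -V'(b)`, if positive, is strictly smaller than the boundary density divided by
the mass: `-V'(b) < e^{-V(b)} / 𝔪([0,b])`. -/
theorem boundary_slope_lt_density_over_mass
    (V V' : ℝ → ℝ) (hV : ConvexOn ℝ Set.univ V)
    (hderiv : ∀ x, HasDerivAt V (V' x) x)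
    (b : ℝ) (hb : 0 < b) :
    0 < -V' b →
      -V' b < Real.exp (-V b) / (∫ x in (0 : ℝ)..b, Real.exp (-V x)) := by
  intro hh
  have hcont : Continuous fun x => Real.exp (-V x) :=
    (continuous_iff_continuousAt.mpr fun x => (hderiv x).continuousAt).neg.rexp
  have hmass_pos : 0 < ∫ x in (0 : ℝ)..b, Real.exp (-V x) :=
    intervalIntegral_pos_of_pos_on (hcont.intervalIntegrable _ _) (fun x _ => Real.exp_pos _) hb
  have hmass_le : ∫ x in (0 : ℝ)..b, Real.exp (-V x)
      ≤ Real.exp (-V b) * ∫ x in (0 : ℝ)..b, Real.exp (-V' b * (x - b)) := by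
    rw [← intervalIntegral.integral_const_mul]
    refine integral_mono_on hb.le (hcont.intervalIntegrable _ _)
      (Continuous.intervalIntegrable (by fun_prop) _ _) fun x _ => ?_
    rw [← Real.exp_add, Real.exp_le_exp]
    linarith [hV.add_mul_sub_le_of_hasDerivAt (mem_univ x) (mem_univ b) (hderiv b)]
  rw [lt_div_iff₀ hmass_pos]
  calc -V' b * ∫ x in (0 : ℝ)..b, Real.exp (-V x)
      ≤ -V' b * (Real.exp (-V b) * ∫ x in (0 : ℝ)..b, Real.exp (-V' b * (x - b))) := by gcongr
    _ < -V' b * (Real.exp (-V b) * (-V' b)⁻¹) := by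
      gcongr
      exact integral_exp_mul_sub_lt_inv hh 0 b
    _ = Real.exp (-V b) := by field_simp [(neg_pos.mp hh).ne]
end
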